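/- arXiv:2104.01126 — 3 statements merged into one kernel-verified Lean document; each statement's English description precedes it below -/
import Mathlib

section
/- Let G be a finite connected graph with edge weights, and let H be a subgraph of G with the same vertex set such that for every edge e = (u,v) of G, either e is in H or there is a path from u to v in H using only edges of weight at most w(e). Then the minimum spanning tree weight of H equals the minimum spanning tree weight of G. -/
/-!
Starting from a minimum spanning tree of `G`, repeatedly exchange an edge `e = s(u, v)` of the
tree that is missing from `H`: deleting `e` splits the tree into the sides of `u` and of `v`,
and the light `H`-path from `u` to `v` crosses between them along an edge of weight at most
`w e`. Swapping `e` for that edge gives a spanning tree of `G` of no larger weight with one edge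
fewer outside `H`, so eventually a spanning tree of `H` of weight at most that of `G`'s minimum
spanning tree is reached. The reverse inequality holds because every spanning tree of `H` is
one of `G`.
-/

open SimpleGraph

/-- `T` is a spanning tree of `G`: a subgraph on the same vertex set that is a tree. -/
def IsSpanningTree {V : Type*} (G T : SimpleGraph V) : Prop :=
  T ≤ G ∧ T.IsTree

open Classical in
/-- Total weight of the edges of a graph. -/
noncomputable def treeWeight {V : Type*} [Fintype V] (w : Sym2 V → ℝ)
    (T : SimpleGraph V) : ℝ :=
  ∑ e ∈ Finset.univ.filter (fun e => e ∈ T.edgeSet), w e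

/-- `T` is a minimum spanning tree of the weighted graph `(G, w)`. -/
def IsMST {V : Type*} [Fintype V] (G : SimpleGraph V) (w : Sym2 V → ℝ)
    (T : SimpleGraph V) : Prop :=
  IsSpanningTree G T ∧
    ∀ T' : SimpleGraph V, IsSpanningTree G T' → treeWeight w T ≤ treeWeight w T'

section

variable {V : Type*}

namespace SimpleGraph

variable {G : SimpleGraph V}

lemma reachable_deleteEdges_or_of_reachable (u v : V) {z : V} (hz : G.Reachable z u) :
    (G.deleteEdges {s(u, v)}).Reachable z u ∨ (G.deleteEdges {s(u, v)}).Reachable z v := by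
  set D := G.deleteEdges {s(u, v)}
  obtain ⟨p⟩ := hz
  suffices key : ∀ {a b : V}, G.Walk a b →
      D.Reachable b u ∨ D.Reachable b v → D.Reachable a u ∨ D.Reachable a v from
    key p (.inl .rfl)
  intro a b q hb
  induction q with
  | nil => exact hb
  | @cons a c b hac q ih =>
    by_cases he : s(a, c) = s(u, v)
    · rcases Sym2.eq_iff.mp he with ⟨rfl, -⟩ | ⟨rfl, -⟩
      exacts [.inl .rfl, .inr .rfl]
    · have hD : D.Adj a c := deleteEdges_adj.mpr ⟨hac, he⟩
      exact (ih hb).imp hD.reachable.trans hD.reachable.trans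

theorem IsTree.deleteEdges_sup_edge {T : SimpleGraph V} (hT : T.IsTree) {u v x y : V}
    (hx : (T.deleteEdges {s(u, v)}).Reachable u x)
    (hy : ¬ (T.deleteEdges {s(u, v)}).Reachable u y) :
    (T.deleteEdges {s(u, v)} ⊔ edge x y).IsTree := by
  set D := T.deleteEdges {s(u, v)}
  have hside : ∀ z, D.Reachable z u ∨ D.Reachable z v := fun z =>
    reachable_deleteEdges_or_of_reachable u v (hT.connected z u)
  have hxy : (D ⊔ edge x y).Adj x y :=
    .inr ((edge_adj _ _ _ _).mpr ⟨.inl ⟨rfl, rfl⟩, by rintro rfl; exact hy hx⟩)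
  have hyv : D.Reachable y v := (hside y).resolve_left fun h => hy h.symm
  have huv : (D ⊔ edge x y).Reachable u v :=
    ((hx.mono le_sup_left).trans hxy.reachable).trans (hyv.mono le_sup_left)
  have hzu : ∀ z, (D ⊔ edge x y).Reachable z u := fun z =>
    (hside z).elim (·.mono le_sup_left) fun h => (h.mono le_sup_left).trans huv.symm
  refine ⟨(connected_iff _).mpr ⟨fun a b => (hzu a).trans (hzu b).symm, ⟨u⟩⟩, ?_⟩
  exact (hT.isAcyclic.anti (deleteEdges_le _)).sup_edge_of_not_reachable fun h => hy (hx.trans h)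

end SimpleGraph

section Weight

variable [Fintype V] (w : Sym2 V → ℝ) {G : SimpleGraph V}

lemma treeWeight_eq_sum_edgeFinset [Fintype G.edgeSet] :
    treeWeight w G = ∑ e ∈ G.edgeFinset, w e :=
  Finset.sum_congr (by ext; simp) fun _ _ => rfl

lemma treeWeight_sup_edge {x y : V} (hxy : x ≠ y) (h : ¬ G.Adj x y) :
    treeWeight w (G ⊔ edge x y) = treeWeight w G + w s(x, y) := by
  classical
  have hedges : (G ⊔ edge x y).edgeFinset = insert s(x, y) G.edgeFinset := by
    ext e
    simp [edgeSet_edge_of_ne hxy, or_comm]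
  rw [treeWeight_eq_sum_edgeFinset, treeWeight_eq_sum_edgeFinset, hedges,
    Finset.sum_insert (by simpa using h), add_comm]

lemma treeWeight_deleteEdges_singleton_add {e : Sym2 V} (he : e ∈ G.edgeSet) :
    treeWeight w (G.deleteEdges {e}) + w e = treeWeight w G := by
  classical
  have hedges : G.edgeFinset = insert e (G.deleteEdges {e}).edgeFinset := by
    ext e'
    by_cases h : e' = e <;> simp [h, he]
  rw [treeWeight_eq_sum_edgeFinset, treeWeight_eq_sum_edgeFinset, hedges,
    Finset.sum_insert (by simp), add_comm]

end Weight

def IsMinimaxPathCover (G H : SimpleGraph V) (w : Sym2 V → ℝ) : Prop :=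
  ∀ u v : V, G.Adj u v → H.Adj u v ∨ ∃ p : H.Walk u v, ∀ e ∈ p.edges, w e ≤ w s(u, v)

section Exchange

variable [Fintype V] {G H : SimpleGraph V} {w : Sym2 V → ℝ}

theorem IsMinimaxPathCover.exists_isSpanningTree_lt_ncard (hcover : IsMinimaxPathCover G H w)
    (hHG : H ≤ G) {T : SimpleGraph V} (hT : IsSpanningTree G T) (hTH : ¬ T ≤ H) :
    ∃ T', IsSpanningTree G T' ∧ treeWeight w T' ≤ treeWeight w T ∧
      (T'.edgeSet \ H.edgeSet).ncard < (T.edgeSet \ H.edgeSet).ncard := by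
  obtain ⟨u, v, hTuv, hHuv⟩ : ∃ u v, T.Adj u v ∧ ¬ H.Adj u v := by
    by_contra! h
    exact hTH fun a b hab => h a b hab
  obtain ⟨p, hp⟩ := (hcover u v (hT.1 hTuv)).resolve_left hHuv
  set D := T.deleteEdges {s(u, v)}
  have hbridge : ¬ D.Reachable u v := isAcyclic_iff_forall_adj_isBridge.mp hT.2.2 hTuv
  obtain ⟨⟨⟨x, y⟩, hHxy⟩, hdp, hx, hy⟩ :=
    p.exists_boundary_dart {z | D.Reachable u z} .rfl hbridge
  have hwxy : w s(x, y) ≤ w s(u, v) := hp _ (p.edges_eq_map_darts ▸ List.mem_map_of_mem hdp)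
  have hDxy : ¬ D.Adj x y := fun h => hy (hx.trans h.reachable)
  have hle : D ⊔ edge x y ≤ G :=
    sup_le ((deleteEdges_le _).trans hT.1) ((edge_le_iff G).mpr (.inr (hHG hHxy)))
  refine ⟨D ⊔ edge x y, ⟨hle, hT.2.deleteEdges_sup_edge hx hy⟩, ?_, Set.ncard_lt_ncard ?_⟩
  · have hD := treeWeight_deleteEdges_singleton_add w ((mem_edgeSet T).mpr hTuv)
    rw [treeWeight_sup_edge w hHxy.ne hDxy]
    linarith
  · have hsub : (D ⊔ edge x y).edgeSet \ H.edgeSet ⊆ (T.edgeSet \ H.edgeSet) \ {s(u, v)} := by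
      rw [edgeSet_sup, edgeSet_deleteEdges]
      rintro e ⟨he | he, heH⟩
      · exact ⟨⟨he.1, heH⟩, he.2⟩
      · obtain rfl := Set.mem_singleton_iff.mp (edgeSet_edge_subset he)
        exact absurd hHxy heH
    exact hsub.trans_ssubset (Set.sdiff_singleton_ssubset.mpr ⟨hTuv, hHuv⟩)

theorem IsMinimaxPathCover.exists_isSpanningTree_treeWeight_le
    (hcover : IsMinimaxPathCover G H w) (hHG : H ≤ G) {T : SimpleGraph V}
    (hT : IsSpanningTree G T) :
    ∃ T', IsSpanningTree H T' ∧ treeWeight w T' ≤ treeWeight w T := by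
  by_cases hTH : T ≤ H
  · exact ⟨T, ⟨hTH, hT.2⟩, le_rfl⟩
  · obtain ⟨T', hT', hw, -⟩ := hcover.exists_isSpanningTree_lt_ncard hHG hT hTH
    obtain ⟨T'', hT'', hw'⟩ := hcover.exists_isSpanningTree_treeWeight_le hHG hT'
    exact ⟨T'', hT'', hw'.trans hw⟩
termination_by (T.edgeSet \ H.edgeSet).ncard
decreasing_by assumption

end Exchange

end

theorem mst_weight_eq_of_path_cover_general {V : Type*} [Fintype V]
    (G H : SimpleGraph V) (hHG : H ≤ G) (w : Sym2 V → ℝ)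
    (hcover : ∀ u v : V, G.Adj u v →
      H.Adj u v ∨ ∃ p : H.Walk u v, ∀ e ∈ p.edges, w e ≤ w s(u, v))
    (TH TG : SimpleGraph V) (h1 : IsMST H w TH) (h2 : IsMST G w TG) :
    treeWeight w TH = treeWeight w TG := by
  obtain ⟨T, hT, hw⟩ :=
    IsMinimaxPathCover.exists_isSpanningTree_treeWeight_le hcover hHG h2.1
  exact le_antisymm ((h1.2 T hT).trans hw) (h2.2 TH ⟨h1.1.1.trans hHG, h1.1.2⟩)

/-- If `H` is a spanning subgraph of a finite connected weighted graph `G` such that for every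
edge `(u,v)` of `G`, either `(u,v)` is in `H` or `u` and `v` are joined in `H` by a path using
only edges of weight at most `w (u,v)`, then the minimum spanning tree weight of `H` equals
that of `G`. -/
theorem mst_weight_eq_of_path_cover {V : Type*} [Fintype V]
    (G H : SimpleGraph V) (hG : G.Connected) (hHG : H ≤ G) (w : Sym2 V → ℝ)
    (hcover : ∀ u v : V, G.Adj u v →
      H.Adj u v ∨ ∃ p : H.Walk u v, ∀ e ∈ p.edges, w e ≤ w s(u, v))
    (TH TG : SimpleGraph V) (h1 : IsMST H w TH) (h2 : IsMST G w TG) :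
    treeWeight w TH = treeWeight w TG :=
  mst_weight_eq_of_path_cover_general G H hHG w hcover TH TG h1 h2
end

section
/- Suppose point sets A and B are geometrically separated: d(A,B) ≥ max{diam(A), diam(B)}, where d(A,B) is the minimum distance between A and B. Let (u*, v*) ∈ A × B minimize the mutual reachability distance d_m over A × B, and let (u, v) ∈ A × B be arbitrary. Then max{cd(u*), cd(u), d(u, u*)} ≤ max{cd(u), cd(v), d(u,v)}; i.e., the mutual reachability distance between u and u* (both in A) is at most the mutual reachability distance between u and v. -/
/-- Mutual reachability distance. -/
def dm {X : Type*} [MetricSpace X] (cd : X → ℝ) (p q : X) : ℝ :=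
  max (max (cd p) (cd q)) (dist p q)

theorem le_dm_left {X : Type*} [MetricSpace X] (cd : X → ℝ) (p q : X) : cd p ≤ dm cd p q :=
  le_max_of_le_left (le_max_left _ _)

theorem Finset.dist_le_dist_of_sup'_le_inf' {X : Type*} [Dist X] {A B : Finset X}
    (hA : A.Nonempty) (hB : B.Nonempty)
    (hsep : ((A ×ˢ A).sup' (hA.product hA) fun pq => dist pq.1 pq.2) ≤
      (A ×ˢ B).inf' (hA.product hB) fun pq => dist pq.1 pq.2)
    {a a' b : X} (ha : a ∈ A) (ha' : a' ∈ A) (hb : b ∈ B) : dist a a' ≤ dist a b :=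
  calc dist a a' ≤ (A ×ˢ A).sup' (hA.product hA) (fun pq => dist pq.1 pq.2) :=
        Finset.le_sup' (fun pq : X × X => dist pq.1 pq.2) (Finset.mk_mem_product ha ha')
    _ ≤ (A ×ˢ B).inf' (hA.product hB) (fun pq => dist pq.1 pq.2) := hsep
    _ ≤ dist a b := Finset.inf'_le (fun pq : X × X => dist pq.1 pq.2) (Finset.mk_mem_product ha hb)

theorem geometrically_separated_intra_le_cross_general {X : Type*} [MetricSpace X]
    (cd : X → ℝ)
    (A B : Finset X) (hA : A.Nonempty) (hB : B.Nonempty)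
    (hgeo :
      max ((A ×ˢ A).sup' (hA.product hA) fun pq => dist pq.1 pq.2)
          ((B ×ˢ B).sup' (hB.product hB) fun pq => dist pq.1 pq.2) ≤
      (A ×ˢ B).inf' (hA.product hB) fun pq => dist pq.1 pq.2)
    (us vs : X) (hus : us ∈ A)
    (hmin : ∀ a ∈ A, ∀ b ∈ B, dm cd us vs ≤ dm cd a b)
    (u v : X) (hu : u ∈ A) (hv : v ∈ B) :
    max (max (cd us) (cd u)) (dist u us) ≤ max (max (cd u) (cd v)) (dist u v) := by
  have hcd_us : cd us ≤ dm cd u v := (le_dm_left cd us vs).trans (hmin u hu v hv)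
  have hdist : dist u us ≤ dist u v :=
    Finset.dist_le_dist_of_sup'_le_inf' hA hB ((le_max_left _ _).trans hgeo) hu hus hv
  exact max_le (max_le hcd_us (le_dm_left cd u v)) (le_max_of_le_right hdist)

/-- If `A` and `B` are geometrically separated (`d(A,B) ≥ max {diam A, diam B}`), `(us, vs)`
minimizes the mutual reachability distance over `A × B`, and `(u, v) ∈ A × B` is arbitrary,
then `max {cd us, cd u, d(u, us)} ≤ max {cd u, cd v, d(u, v)}`. -/
theorem geometrically_separated_intra_le_cross {X : Type*} [MetricSpace X]
    (cd : X → ℝ) (hcd : ∀ x, 0 ≤ cd x)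
    (A B : Finset X) (hA : A.Nonempty) (hB : B.Nonempty)
    (hgeo :
      max ((A ×ˢ A).sup' (hA.product hA) fun pq => dist pq.1 pq.2)
          ((B ×ˢ B).sup' (hB.product hB) fun pq => dist pq.1 pq.2) ≤
      (A ×ˢ B).inf' (hA.product hB) fun pq => dist pq.1 pq.2)
    (us vs : X) (hus : us ∈ A) (hvs : vs ∈ B)
    (hmin : ∀ a ∈ A, ∀ b ∈ B, dm cd us vs ≤ dm cd a b)
    (u v : X) (hu : u ∈ A) (hv : v ∈ B) :
    max (max (cd us) (cd u)) (dist u us) ≤ max (max (cd u) (cd v)) (dist u v) :=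
  geometrically_separated_intra_le_cross_general cd A B hA hB hgeo us vs hus hmin u v hu hv
end

section
/- Let T be a tree with distinct edge weights and let (u,v) be the maximum-weight edge of T. Then in the single-linkage dendrogram of T (built by merging in increasing weight order), the root node corresponds to edge (u,v), and its two children's leaf sets are exactly the vertex sets of the two components of T − (u,v). -/
/-!
Induction on the number of processed edges shows that the cluster of `x` after `i` merges is the
connected component of `x` in the graph spanned by the first `i` edges, since merging along
`(a, b)` unites the components of `a` and `b`. After all edges this graph is the connected tree
`T`; one step earlier it is `T` with its last, i.e. heaviest, edge deleted.
-/

open SimpleGraph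

namespace SimpleGraph

variable {V : Type*}

theorem reachable_sup_edge_iff {G : SimpleGraph V} {a b x y : V} :
    (G ⊔ edge a b).Reachable x y ↔
      G.Reachable x y ∨
        (G.Reachable x a ∨ G.Reachable x b) ∧ (G.Reachable a y ∨ G.Reachable b y) := by
  constructor
  · rintro ⟨p⟩
    induction p with
    | nil => exact .inl .rfl
    | @cons x z y hxz _ ih =>
      rcases hxz with hxz | hxz
      · rcases ih with h | ⟨hz, h⟩
        · exact .inl (hxz.reachable.trans h)
        · exact .inr ⟨hz.imp hxz.reachable.trans hxz.reachable.trans, h⟩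
      · rcases (edge_adj ..).1 hxz with ⟨⟨rfl, rfl⟩ | ⟨rfl, rfl⟩, -⟩
        · exact .inr ⟨.inl .rfl, ih.elim .inr And.right⟩
        · exact .inr ⟨.inr .rfl, ih.elim .inl And.right⟩
  · have hle {x y : V} (h : G.Reachable x y) : (G ⊔ edge a b).Reachable x y := h.mono le_sup_left
    have hab : (G ⊔ edge a b).Reachable a b := by
      by_cases hab : a = b
      · exact hab ▸ .rfl
      · exact Adj.reachable (.inr ((edge_adj ..).2 ⟨.inl ⟨rfl, rfl⟩, hab⟩))
    rintro (h | ⟨hx | hx, hy | hy⟩)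
    · exact hle h
    · exact (hle hx).trans (hle hy)
    · exact (hle hx).trans (hab.trans (hle hy))
    · exact (hle hx).trans (hab.symm.trans (hle hy))
    · exact (hle hx).trans (hle hy)

open Classical in
theorem setOf_reachable_sup_edge (G : SimpleGraph V) (a b x : V) :
    {y | (G ⊔ edge a b).Reachable x y} =
      if x ∈ {y | G.Reachable a y} ∪ {y | G.Reachable b y} then
        {y | G.Reachable a y} ∪ {y | G.Reachable b y}
      else {y | G.Reachable x y} := by
  ext y
  simp only [Set.mem_union, Set.mem_ofPred_eq, reachable_sup_edge_iff]
  split_ifs with hx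
  · refine ⟨?_, fun hy => .inr ⟨hx.imp .symm .symm, hy⟩⟩
    rintro (hy | ⟨-, hy⟩)
    · exact hx.imp (·.trans hy) (·.trans hy)
    · exact hy
  · have hxab : ¬(G.Reachable x a ∨ G.Reachable x b) := fun h => hx (h.imp .symm .symm)
    simp only [hxab, false_and, or_false, Set.mem_ofPred_eq]

def fromEdgeList (l : List (V × V)) : SimpleGraph V :=
  fromEdgeSet {e | e ∈ l.map fun p => s(p.1, p.2)}

@[simp]
theorem fromEdgeList_nil : fromEdgeList ([] : List (V × V)) = ⊥ := by
  simp [fromEdgeList]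

theorem fromEdgeList_append_singleton (l : List (V × V)) (p : V × V) :
    fromEdgeList (l ++ [p]) = fromEdgeList l ⊔ edge p.1 p.2 := by
  rw [fromEdgeList, edge, fromEdgeList, ← fromEdgeSet_union]
  congr 1
  ext e
  simp [or_comm]

theorem deleteEdges_fromEdgeList_append_singleton {l : List (V × V)} {p : V × V}
    (hp : s(p.1, p.2) ∉ l.map fun p => s(p.1, p.2)) :
    (fromEdgeList (l ++ [p])).deleteEdges {s(p.1, p.2)} = fromEdgeList l := by
  rw [fromEdgeList, fromEdgeList, deleteEdges_fromEdgeSet]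
  congr 1
  ext e
  simp only [List.map_append, Set.mem_sdiff, Set.mem_ofPred_eq, List.mem_append,
    Set.mem_singleton_iff]
  constructor
  · rintro ⟨he | he, hne⟩
    · exact he
    · exact absurd (List.mem_singleton.1 he) hne
  · exact fun he => ⟨.inl he, fun hep => hp (hep ▸ he)⟩

theorem fromEdgeList_eq_of_adj_iff {G : SimpleGraph V} {l : List (V × V)}
    (h : ∀ x y, G.Adj x y ↔ ∃ p ∈ l, p = (x, y) ∨ p = (y, x)) : fromEdgeList l = G := by
  ext x y
  rw [fromEdgeList, fromEdgeSet_adj, Set.mem_ofPred_eq, List.mem_map]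
  constructor
  · rintro ⟨⟨p, hp, hpxy⟩, -⟩
    exact (h x y).2 ⟨p, hp, by simpa [Sym2.eq_iff, Prod.ext_iff] using hpxy⟩
  · intro hxy
    obtain ⟨p, hp, hpxy⟩ := (h x y).1 hxy
    exact ⟨⟨p, hp, by rcases hpxy with rfl | rfl <;> simp [Sym2.eq_swap]⟩, hxy.ne⟩

end SimpleGraph

open Classical in
theorem cluster_eq_setOf_reachable_fromEdgeList {V : Type*} (edges : List (V × V))
    (clus : ℕ → V → Set V)
    (h0 : ∀ x : V, clus 0 x = {x})
    (hstep : ∀ i : Fin edges.length, ∀ x : V,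
      clus (i + 1) x =
        if x ∈ clus i (edges.get i).1 ∪ clus i (edges.get i).2 then
          clus i (edges.get i).1 ∪ clus i (edges.get i).2
        else clus i x) :
    ∀ i ≤ edges.length, ∀ x,
      clus i x = {y | (fromEdgeList (edges.take i)).Reachable x y} := by
  intro i
  induction i with
  | zero =>
    intro _ x
    ext y
    simp [h0, eq_comm]
  | succ i ih =>
    intro hi x
    have hprefix : edges.take (i + 1) = edges.take i ++ [edges.get ⟨i, hi⟩] := by
      rw [List.take_add_one, List.getElem?_eq_getElem hi]
      rfl
    rw [hstep ⟨i, hi⟩ x, hprefix, fromEdgeList_append_singleton, setOf_reachable_sup_edge]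
    simp only [ih (Nat.le_of_succ_le hi)]

open Classical in
theorem dendrogram_root_is_max_edge_general {V : Type*}
    (T : SimpleGraph V) (hT : T.IsTree) (w : Sym2 V → ℝ)
    (edges : List (V × V)) (hne : edges ≠ [])
    (hmem : ∀ x y : V, T.Adj x y ↔ ∃ p ∈ edges, p = (x, y) ∨ p = (y, x))
    (hnodup : (edges.map fun p => s(p.1, p.2)).Nodup)
    (hsorted : edges.Pairwise fun p q => w s(p.1, p.2) ≤ w s(q.1, q.2))
    (clus : ℕ → V → Set V)
    (h0 : ∀ x : V, clus 0 x = {x})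
    (hstep : ∀ i : Fin edges.length, ∀ x : V,
      clus (i + 1) x =
        if x ∈ clus i (edges.get i).1 ∪ clus i (edges.get i).2 then
          clus i (edges.get i).1 ∪ clus i (edges.get i).2
        else clus i x)
    (u v : V) (hlast : edges.getLast hne = (u, v)) :
    (∀ p ∈ edges, w s(p.1, p.2) ≤ w s(u, v)) ∧
    clus edges.length u = Set.univ ∧
    clus (edges.length - 1) u = {x | (T.deleteEdges {s(u, v)}).Reachable u x} ∧
    clus (edges.length - 1) v = {x | (T.deleteEdges {s(u, v)}).Reachable v x} := by
  have hclus := cluster_eq_setOf_reachable_fromEdgeList edges clus h0 hstep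
  have hsplit : edges = edges.dropLast ++ [(u, v)] :=
    hlast ▸ (List.dropLast_append_getLast hne).symm
  have hT_eq : fromEdgeList edges = T := fromEdgeList_eq_of_adj_iff hmem
  have huv_notMem : s(u, v) ∉ edges.dropLast.map fun p => s(p.1, p.2) := by
    rw [hsplit, List.map_append, List.nodup_append] at hnodup
    exact fun h => hnodup.2.2 _ h _ (by simp) rfl
  have hdrop : fromEdgeList edges.dropLast = T.deleteEdges {s(u, v)} := by
    conv_rhs => rw [← hT_eq, hsplit, deleteEdges_fromEdgeList_append_singleton huv_notMem]
  have hclus_drop (z : V) :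
      clus (edges.length - 1) z = {x | (T.deleteEdges {s(u, v)}).Reachable z x} := by
    rw [hclus _ (Nat.sub_le _ _), ← List.dropLast_eq_take, hdrop]
  refine ⟨fun p hp => ?_, ?_, hclus_drop u, hclus_drop v⟩
  · simpa only [hlast] using hsorted.rel_getLast_of_rel_getLast_getLast hp le_rfl
  · rw [hclus _ le_rfl, List.take_length, hT_eq]
    exact Set.eq_univ_of_forall (hT.connected.preconnected u)

open Classical in
/-- Let `T` be a tree with distinct edge weights and let `(u, v)` be its maximum-weight edge
(the last edge in the sorted enumeration `edges`). In the single-linkage dendrogram of `T`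
(built by merging in increasing weight order), the root node corresponds to the edge `(u, v)`:
the final merge is of the edge `(u, v)`, the root cluster is all of `V`, and the leaf sets of
its two children are exactly the vertex sets of the two components of `T − (u, v)`. -/
theorem dendrogram_root_is_max_edge {V : Type*} [Fintype V]
    (T : SimpleGraph V) (hT : T.IsTree) (w : Sym2 V → ℝ)
    (hw : ∀ e ∈ T.edgeSet, ∀ e' ∈ T.edgeSet, w e = w e' → e = e')
    (edges : List (V × V)) (hne : edges ≠ [])
    (hmem : ∀ x y : V, T.Adj x y ↔ ∃ p ∈ edges, p = (x, y) ∨ p = (y, x))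
    (hnodup : (edges.map fun p => s(p.1, p.2)).Nodup)
    (hsorted : edges.Pairwise fun p q => w s(p.1, p.2) ≤ w s(q.1, q.2))
    (clus : ℕ → V → Set V)
    (h0 : ∀ x : V, clus 0 x = {x})
    (hstep : ∀ i : Fin edges.length, ∀ x : V,
      clus (i + 1) x =
        if x ∈ clus i (edges.get i).1 ∪ clus i (edges.get i).2 then
          clus i (edges.get i).1 ∪ clus i (edges.get i).2
        else clus i x)
    (u v : V) (hlast : edges.getLast hne = (u, v)) :
    (∀ p ∈ edges, w s(p.1, p.2) ≤ w s(u, v)) ∧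
    clus edges.length u = Set.univ ∧
    clus (edges.length - 1) u = {x | (T.deleteEdges {s(u, v)}).Reachable u x} ∧
    clus (edges.length - 1) v = {x | (T.deleteEdges {s(u, v)}).Reachable v x} :=
  dendrogram_root_is_max_edge_general T hT w edges hne hmem hnodup hsorted clus h0 hstep u v hlast
end
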